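/- (Dowker's ratio ergodic theorem) Suppose X is a Borel space, f : X → ℝ, g : X → (0,∞), T : X → X, w : X → (0,∞) are Borel, S_g^n(x) → ∞ for all x, and μ is a T-conservative T-w-invariant Borel measure with f and g μ-integrable. Then the limit L(x) = lim_n S_f^n(x)/S_g^n(x) exists μ-almost everywhere, g·L is μ-integrable, and ∫ f dμ = ∫ g·L dμ. -/

import Mathlib

open Finset Filter MeasureTheory

noncomputable def cocycle {X : Type*} (T : X → X) (w : X → ℝ) (x : X) (k : ℕ) : ℝ :=
  ∏ j ∈ Finset.range k, w (T^[j] x)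

noncomputable def wSum {X : Type*} (T : X → X) (w : X → ℝ) (h : X → ℝ) (n : ℕ) (x : X) : ℝ :=
  ∑ k ∈ Finset.range n, h (T^[k] x) * cocycle T w x k

noncomputable def ratio {X : Type*} (T : X → X) (w f g : X → ℝ) (n : ℕ) (x : X) : ℝ :=
  wSum T w f n x / wSum T w g n x

def IsWandering {X : Type*} (T : X → X) (W : Set X) : Prop :=
  ∀ x : X, (W ∩ Set.range fun k : ℕ => T^[k] x).Subsingleton

def IsConservative {X : Type*} [MeasurableSpace X] (T : X → X)
    (μ : Measure X) : Prop :=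
  ∀ W : Set X, MeasurableSet W → IsWandering T W → μ W = 0

def IsTWInvariant {X : Type*} [MeasurableSpace X] (T : X → X) (w : X → ℝ)
    (μ : Measure X) : Prop :=
  ∀ B : Set X, MeasurableSet B →
    μ B = ∫⁻ x in T ⁻¹' B, ENNReal.ofReal (w x) ∂μ

/-!
The weighted sums satisfy `S_{n+1} h = h + w · (S_n h ∘ T)`, and `w`-invariance of `μ` says
`∫ w · (h ∘ T) dμ = ∫ h dμ`. Together they give Hopf's maximal inequality
`∫_{∃ n, S_n F > 0} F dμ ≥ 0`. Applied to `F = f - b g` on a `T`-invariant set `A` on which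
`limsup S_n f / S_n g > b`, it gives `b ∫_A g ≤ ∫_A f`, and dually for the liminf. Because
`S_n g → ∞`, the limsup and liminf of the ratios are `T`-invariant, so the sets where the limsup
is infinite, or where `liminf < a < b < limsup`, are invariant, and the two inequalities force
them to be null. Hence the ratios converge a.e. to a finite `L`, and on every slab
`{a ≤ L < b}` the quotient `∫ f / ∫ g` lies in `[a, b]`. Summing over slabs of width `ε` shows
that `g L` is integrable and `|∫ f - ∫ g L| ≤ ε ∫ g`.
-/

section

variable {X : Type*} {T : X → X} {w f g F : X → ℝ}

section Algebra

lemma cocycle_succ (x : X) (k : ℕ) : cocycle T w x (k + 1) = w x * cocycle T w (T x) k := by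
  simp only [cocycle, prod_range_succ', Function.iterate_succ_apply, Function.iterate_zero_apply]
  ring

@[simp]
lemma wSum_zero (x : X) : wSum T w F 0 x = 0 := by simp [wSum]

lemma wSum_succ (n : ℕ) (x : X) : wSum T w F (n + 1) x = F x + w x * wSum T w F n (T x) := by
  simp only [wSum, sum_range_succ', cocycle_succ, Function.iterate_succ_apply, mul_sum]
  simp [cocycle, add_comm, mul_left_comm]

lemma wSum_sub_mul (b : ℝ) (n : ℕ) (x : X) :
    wSum T w (fun y => f y - b * g y) n x = wSum T w f n x - b * wSum T w g n x := by
  simp only [wSum, mul_sum, ← sum_sub_distrib]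
  exact sum_congr rfl fun _ _ => by ring

lemma wSum_neg (n : ℕ) (x : X) : wSum T w (-F) n x = -wSum T w F n x := by
  simp [wSum]

lemma wSum_indicator {A : Set X} (hA : T ⁻¹' A = A) (n : ℕ) (x : X) :
    wSum T w (A.indicator F) n x = A.indicator (wSum T w F n) x := by
  have hiter : ∀ k, T^[k] x ∈ A ↔ x ∈ A := fun k => by
    rw [← Set.mem_preimage, Set.preimage_iterate_eq, Function.iterate_fixed hA]
  by_cases hx : x ∈ A
  · simp [wSum, Set.indicator_of_mem hx, Set.indicator_of_mem ((hiter _).2 hx)]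
  · simp [wSum, Set.indicator_of_notMem hx, Set.indicator_of_notMem (mt (hiter _).1 hx)]

end Algebra

section Transfer

variable [MeasurableSpace X]

structure WeightedMeasurePreserving (T : X → X) (w : X → ℝ) (μ : Measure X) : Prop where
  measurable : Measurable T
  measurable_weight : Measurable w
  weight_pos : ∀ x, 0 < w x
  invariant : IsTWInvariant T w μ

namespace WeightedMeasurePreserving

variable {μ : Measure X} (hsys : WeightedMeasurePreserving T w μ)
include hsys

lemma map_withDensity_eq : (μ.withDensity fun x => ENNReal.ofReal (w x)).map T = μ := by
  ext B hB
  rw [Measure.map_apply hsys.measurable hB, withDensity_apply _ (hsys.measurable hB)]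
  exact (hsys.invariant B hB).symm

lemma integrable_mul_comp (hF : Integrable F μ) : Integrable (fun x => w x * F (T x)) μ := by
  rw [← hsys.map_withDensity_eq] at hF
  rw [integrable_map_measure hF.1 hsys.measurable.aemeasurable,
    integrable_withDensity_iff_integrable_smul' hsys.measurable_weight.ennreal_ofReal
      (ae_of_all _ fun _ => ENNReal.ofReal_lt_top)] at hF
  simpa [ENNReal.toReal_ofReal (hsys.weight_pos _).le] using hF

lemma integral_mul_comp (hF : Integrable F μ) : ∫ x, w x * F (T x) ∂μ = ∫ x, F x ∂μ := by
  have hF' := hF.1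
  rw [← hsys.map_withDensity_eq] at hF'
  conv_rhs => rw [← hsys.map_withDensity_eq]
  rw [integral_map hsys.measurable.aemeasurable hF',
    integral_withDensity_eq_integral_toReal_smul hsys.measurable_weight.ennreal_ofReal
      (ae_of_all _ fun _ => ENNReal.ofReal_lt_top)]
  simp [ENNReal.toReal_ofReal (hsys.weight_pos _).le]

lemma measurable_wSum (hF : Measurable F) (n : ℕ) : Measurable (wSum T w F n) :=
  Finset.measurable_sum _ fun k _ => (hF.comp (hsys.measurable.iterate k)).mul <|
    Finset.measurable_prod _ fun j _ => hsys.measurable_weight.comp (hsys.measurable.iterate j)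

lemma integrable_wSum (hF : Integrable F μ) (n : ℕ) : Integrable (wSum T w F n) μ := by
  induction n with
  | zero => simp [funext (wSum_zero (T := T) (w := w) (F := F))]
  | succ n ih =>
    rw [funext (wSum_succ (T := T) (w := w) (F := F) n)]
    exact hF.add (hsys.integrable_mul_comp ih)

end WeightedMeasurePreserving

end Transfer

section Hopf

noncomputable def wSumMax (T : X → X) (w F : X → ℝ) (N : ℕ) : X → ℝ :=
  (range (N + 1)).sup' nonempty_range_add_one fun k => wSum T w F k

lemma wSumMax_apply (N : ℕ) (x : X) :
    wSumMax T w F N x = (range (N + 1)).sup' nonempty_range_add_one fun k => wSum T w F k x :=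
  Finset.sup'_apply _ _ _

lemma wSum_le_wSumMax {k N : ℕ} (hk : k ≤ N) (x : X) : wSum T w F k x ≤ wSumMax T w F N x := by
  rw [wSumMax_apply]
  exact le_sup' (fun k => wSum T w F k x) (mem_range_succ_iff.2 hk)

lemma wSumMax_nonneg (N : ℕ) (x : X) : 0 ≤ wSumMax T w F N x :=
  wSum_zero (T := T) (w := w) (F := F) x ▸ wSum_le_wSumMax N.zero_le x

lemma exists_wSum_eq_wSumMax (N : ℕ) (x : X) : ∃ k ≤ N, wSumMax T w F N x = wSum T w F k x := by
  obtain ⟨k, hk, heq⟩ := exists_mem_eq_sup' nonempty_range_add_one fun k => wSum T w F k x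
  exact ⟨k, mem_range_succ_iff.1 hk, (wSumMax_apply N x).trans heq⟩

lemma wSumMax_le_of_pos {N : ℕ} {x : X} (hx : 0 < wSumMax T w F N x) (hw : 0 ≤ w x) :
    wSumMax T w F N x ≤ F x + w x * wSumMax T w F N (T x) := by
  obtain ⟨k, hkN, hk⟩ := exists_wSum_eq_wSumMax (T := T) (w := w) (F := F) N x
  rcases k with _ | k
  · simp [hk] at hx
  · rw [hk, wSum_succ]
    gcongr
    exact wSum_le_wSumMax (by omega) _

variable [MeasurableSpace X] {μ : Measure X}

namespace WeightedMeasurePreserving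

variable (hsys : WeightedMeasurePreserving T w μ)
include hsys

lemma measurable_wSumMax (hF : Measurable F) (N : ℕ) : Measurable (wSumMax T w F N) :=
  Finset.measurable_sup' _ fun k _ => hsys.measurable_wSum hF k

lemma integrable_wSumMax (hF : Integrable F μ) (N : ℕ) : Integrable (wSumMax T w F N) μ :=
  sup'_induction (p := fun h => Integrable h μ) _ _ (fun _ h₁ _ h₂ => h₁.sup h₂) fun k _ =>
    hsys.integrable_wSum hF k

lemma setIntegral_wSumMax_pos_nonneg (hFm : Measurable F) (hF : Integrable F μ) (N : ℕ) :
    0 ≤ ∫ x in {x | 0 < wSumMax T w F N x}, F x ∂μ := by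
  set M := wSumMax T w F N
  set E := {x | 0 < M x}
  have hM := hsys.integrable_wSumMax hF N
  have hMT := hsys.integrable_mul_comp hM
  have hE : MeasurableSet E := measurableSet_lt measurable_const (hsys.measurable_wSumMax hFm N)
  calc 0 = ∫ x, M x ∂μ - ∫ x, w x * M (T x) ∂μ := by rw [hsys.integral_mul_comp hM, sub_self]
    _ ≤ ∫ x in E, M x ∂μ - ∫ x in E, w x * M (T x) ∂μ := by
      rw [setIntegral_eq_integral_of_forall_compl_eq_zero (s := E) (f := M) fun x hx =>
        (wSumMax_nonneg N x).antisymm' (not_lt.1 hx)]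
      gcongr ?_ - ?_
      exact setIntegral_le_integral hMT <| ae_of_all _ fun x =>
        mul_nonneg (hsys.weight_pos x).le (wSumMax_nonneg N _)
    _ = ∫ x in E, (M x - w x * M (T x)) ∂μ := (integral_sub hM.integrableOn hMT.integrableOn).symm
    _ ≤ ∫ x in E, F x ∂μ := setIntegral_mono_on (hM.sub hMT).integrableOn hF.integrableOn hE
      fun x hx => by linarith [wSumMax_le_of_pos hx (hsys.weight_pos x).le]

lemma setIntegral_exists_wSum_pos_nonneg (hFm : Measurable F) (hF : Integrable F μ) :
    0 ≤ ∫ x in {x | ∃ n, 0 < wSum T w F n x}, F x ∂μ := by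
  have hunion : ⋃ N, {x | 0 < wSumMax T w F N x} = {x | ∃ n, 0 < wSum T w F n x} := by
    ext x
    simp only [Set.mem_iUnion, Set.mem_ofPred_eq]
    constructor
    · rintro ⟨N, hN⟩
      obtain ⟨k, -, hk⟩ := exists_wSum_eq_wSumMax (T := T) (w := w) (F := F) N x
      exact ⟨k, hk ▸ hN⟩
    · rintro ⟨n, hn⟩
      exact ⟨n, hn.trans_le (wSum_le_wSumMax le_rfl x)⟩
  have hmono : Monotone fun N => {x | 0 < wSumMax T w F N x} :=
    fun N N' hNN' x (hx : 0 < wSumMax T w F N x) => by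
    obtain ⟨k, hk, hkeq⟩ := exists_wSum_eq_wSumMax (T := T) (w := w) (F := F) N x
    exact (hkeq ▸ hx).trans_le (wSum_le_wSumMax (hk.trans hNN') x)
  have htends := tendsto_setIntegral_of_monotone
    (fun N => measurableSet_lt measurable_const (hsys.measurable_wSumMax hFm N)) hmono
    hF.integrableOn
  rw [hunion] at htends
  exact ge_of_tendsto htends (Eventually.of_forall (hsys.setIntegral_wSumMax_pos_nonneg hFm hF))

lemma setIntegral_nonneg_of_exists_wSum_pos (hFm : Measurable F) (hF : Integrable F μ)
    {A : Set X} (hA : MeasurableSet A) (hAinv : T ⁻¹' A = A)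
    (hpos : ∀ x ∈ A, ∃ n, 0 < wSum T w F n x) : 0 ≤ ∫ x in A, F x ∂μ := by
  have hset : {x | ∃ n, 0 < wSum T w (A.indicator F) n x} = A := by
    ext x
    simp only [Set.mem_ofPred_eq, wSum_indicator hAinv]
    by_cases hx : x ∈ A <;> simp [hx, hpos]
  have h := hsys.setIntegral_exists_wSum_pos_nonneg (hFm.indicator hA) (hF.indicator hA)
  rwa [hset, setIntegral_indicator hA, Set.inter_self] at h

end WeightedMeasurePreserving

end Hopf

lemma limsup_sub_div_sub_le {a b : ℕ → ℝ} (hb : Tendsto b atTop atTop) (c d : ℝ) :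
    limsup (fun n => (((a n - c) / (b n - d) : ℝ) : EReal)) atTop
      ≤ limsup (fun n => ((a n / b n : ℝ) : EReal)) atTop := by
  refine EReal.le_of_forall_lt_iff_le.1 fun q hq => ?_
  have hbd : Tendsto (fun n => b n - d) atTop atTop := tendsto_atTop_add_const_right _ _ hb
  -- `a - c < q b - c = q (b - d) + (q d - c)` once `a / b < q`
  have hle : ∀ᶠ n in atTop, (((a n - c) / (b n - d) : ℝ) : EReal)
      ≤ ((q + |q * d - c| / (b n - d) : ℝ) : EReal) := by
    filter_upwards [eventually_lt_of_limsup_lt hq, hb.eventually_gt_atTop 0,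
      hbd.eventually_gt_atTop 0] with n hn hb0 hbd0
    rw [EReal.coe_lt_coe_iff, div_lt_iff₀ hb0] at hn
    rw [EReal.coe_le_coe_iff, div_le_iff₀ hbd0, add_mul, div_mul_cancel₀ _ hbd0.ne']
    linarith [le_abs_self (q * d - c)]
  have hlim : Tendsto (fun n => ((q + |q * d - c| / (b n - d) : ℝ) : EReal)) atTop (nhds q) := by
    refine (continuous_coe_real_ereal.tendsto q).comp ?_
    simpa using tendsto_const_nhds.add (tendsto_const_nhds.div_atTop hbd)
  exact (limsup_le_limsup hle).trans hlim.limsup_eq.le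

lemma limsup_sub_div_sub_eq {a b : ℕ → ℝ} (hb : Tendsto b atTop atTop) (c d : ℝ) :
    limsup (fun n => (((a n - c) / (b n - d) : ℝ) : EReal)) atTop
      = limsup (fun n => ((a n / b n : ℝ) : EReal)) atTop := by
  refine (limsup_sub_div_sub_le hb c d).antisymm ?_
  simpa [← sub_eq_add_neg] using limsup_sub_div_sub_le (a := fun n => a n - c)
    (tendsto_atTop_add_const_right _ (-d) hb) (-c) (-d)

section RatioLimits

noncomputable def ratioLimsup (T : X → X) (w f g : X → ℝ) (x : X) : EReal :=
  limsup (fun n => (ratio T w f g n x : EReal)) atTop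

noncomputable def ratioLiminf (T : X → X) (w f g : X → ℝ) (x : X) : EReal :=
  liminf (fun n => (ratio T w f g n x : EReal)) atTop

lemma ratioLiminf_eq_neg_ratioLimsup_neg (x : X) :
    ratioLiminf T w f g x = -ratioLimsup T w (-f) g x := by
  simp only [ratioLimsup, ratioLiminf, ratio, wSum_neg, neg_div, EReal.coe_neg]
  rw [← Pi.neg_def, EReal.limsup_neg, neg_neg]

lemma ratioLimsup_comp (hw : ∀ x, w x ≠ 0)
    (hdiv : ∀ x, Tendsto (fun n => wSum T w g n x) atTop atTop) :
    ratioLimsup T w f g ∘ T = ratioLimsup T w f g := by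
  ext x
  have hshift : ∀ n, ratio T w f g n (T x)
      = (wSum T w f (n + 1) x - f x) / (wSum T w g (n + 1) x - g x) := fun n => by
    rw [ratio, wSum_succ, wSum_succ, add_sub_cancel_left, add_sub_cancel_left,
      mul_div_mul_left _ _ (hw x)]
  simp only [Function.comp_apply, ratioLimsup, hshift]
  exact (limsup_nat_add (fun n => (((wSum T w f n x - f x) / (wSum T w g n x - g x) : ℝ) : EReal))
    1).trans (limsup_sub_div_sub_eq (hdiv x) _ _)

lemma ratioLiminf_comp (hw : ∀ x, w x ≠ 0)
    (hdiv : ∀ x, Tendsto (fun n => wSum T w g n x) atTop atTop) :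
    ratioLiminf T w f g ∘ T = ratioLiminf T w f g := by
  ext x
  simp only [Function.comp_apply, ratioLiminf_eq_neg_ratioLimsup_neg,
    ← congrFun (ratioLimsup_comp (f := -f) hw hdiv) x]

noncomputable def ratioLimit (T : X → X) (w f g : X → ℝ) (x : X) : ℝ :=
  (ratioLimsup T w f g x).toReal

lemma ratioLimit_comp (hw : ∀ x, w x ≠ 0)
    (hdiv : ∀ x, Tendsto (fun n => wSum T w g n x) atTop atTop) :
    ratioLimit T w f g ∘ T = ratioLimit T w f g := by
  show EReal.toReal ∘ (ratioLimsup T w f g ∘ T) = _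
  rw [ratioLimsup_comp hw hdiv]
  rfl

lemma exists_wSum_sub_mul_pos_of_lt_ratioLimsup {b : ℝ} (hb : b < ratioLimsup T w f g x)
    (hdiv : Tendsto (fun n => wSum T w g n x) atTop atTop) :
    ∃ n, 0 < wSum T w (fun y => f y - b * g y) n x := by
  obtain ⟨n, hn, hgn⟩ := ((frequently_lt_of_lt_limsup (by isBoundedDefault) hb).and_eventually
    (hdiv.eventually_gt_atTop 0)).exists
  rw [EReal.coe_lt_coe_iff, ratio, lt_div_iff₀ hgn] at hn
  exact ⟨n, by rw [wSum_sub_mul]; linarith⟩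

end RatioLimits

section Slabs

variable [MeasurableSpace X] {μ : Measure X} {L : X → ℝ}

def RatioBoundedOnSlabs (μ : Measure X) (f g L : X → ℝ) : Prop :=
  ∀ a b : ℝ, a * ∫ x in L ⁻¹' Set.Ico a b, g x ∂μ ≤ ∫ x in L ⁻¹' Set.Ico a b, f x ∂μ ∧
    ∫ x in L ⁻¹' Set.Ico a b, f x ∂μ ≤ b * ∫ x in L ⁻¹' Set.Ico a b, g x ∂μ

lemma hasSum_setIntegral_preimage_Ico_zsmul (hL : Measurable L) {ε : ℝ} (hε : 0 < ε)
    (hF : Integrable F μ) :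
    HasSum (fun k : ℤ => ∫ x in L ⁻¹' Set.Ico (k • ε) ((k + 1) • ε), F x ∂μ) (∫ x, F x ∂μ) := by
  have h := hasSum_integral_iUnion (fun k : ℤ => hL measurableSet_Ico)
    (fun k l hkl => ((Set.pairwise_disjoint_Ico_add_zsmul (0 : ℝ) ε hkl).preimage L :))
    hF.integrableOn
  simp only [zero_add] at h
  rwa [← Set.preimage_iUnion, iUnion_Ico_zsmul hε, Set.preimage_univ,
    Measure.restrict_univ] at h

section

variable {a b : ℝ} (hg0 : ∀ x, 0 ≤ g x) (hg : Integrable g μ)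
include hg0 hg

lemma integrableOn_mul_preimage_Ico (hL : Measurable L) :
    IntegrableOn (fun x => g x * L x) (L ⁻¹' Set.Ico a b) μ := by
  refine (hg.const_mul (|a| + |b|)).integrableOn.mono' (hg.1.mul hL.aestronglyMeasurable).restrict
    ((ae_restrict_iff' (hL measurableSet_Ico)).2 (ae_of_all _ fun x hx => ?_))
  rw [norm_mul, Real.norm_of_nonneg (hg0 x), Real.norm_eq_abs, mul_comm]
  refine mul_le_mul_of_nonneg_right ?_ (hg0 x)
  exact (abs_le_max_abs_abs hx.1 hx.2.le).trans (max_le_add_of_nonneg (abs_nonneg a) (abs_nonneg b))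

lemma abs_setIntegral_sub_setIntegral_mul_le (hL : Measurable L)
    (hfg : RatioBoundedOnSlabs μ f g L) :
    |∫ x in L ⁻¹' Set.Ico a b, f x ∂μ - ∫ x in L ⁻¹' Set.Ico a b, g x * L x ∂μ|
      ≤ (b - a) * ∫ x in L ⁻¹' Set.Ico a b, g x ∂μ := by
  have hS : MeasurableSet (L ⁻¹' Set.Ico a b) := hL measurableSet_Ico
  have hgL := integrableOn_mul_preimage_Ico (a := a) (b := b) hg0 hg hL
  have hlow : a * ∫ x in L ⁻¹' Set.Ico a b, g x ∂μ ≤ ∫ x in L ⁻¹' Set.Ico a b, g x * L x ∂μ := by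
    rw [← integral_const_mul]
    exact setIntegral_mono_on (hg.const_mul a).integrableOn hgL hS fun x hx => by
      rw [mul_comm]; exact mul_le_mul_of_nonneg_left hx.1 (hg0 x)
  have hup : ∫ x in L ⁻¹' Set.Ico a b, g x * L x ∂μ ≤ b * ∫ x in L ⁻¹' Set.Ico a b, g x ∂μ := by
    rw [← integral_const_mul]
    exact setIntegral_mono_on hgL (hg.const_mul b).integrableOn hS fun x hx => by
      rw [mul_comm b]; exact mul_le_mul_of_nonneg_left hx.2.le (hg0 x)
  rw [abs_sub_le_iff]
  constructor <;> linarith [hfg a b]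

lemma setIntegral_norm_mul_le (hL : Measurable L) (hf : Integrable f μ)
    (hfg : RatioBoundedOnSlabs μ f g L) :
    ∫ x in L ⁻¹' Set.Ico a b, ‖g x * L x‖ ∂μ
      ≤ ∫ x in L ⁻¹' Set.Ico a b, (|f x| + 2 * (b - a) * g x) ∂μ := by
  set G := ∫ x in L ⁻¹' Set.Ico a b, g x ∂μ
  have hpt : ∫ x in L ⁻¹' Set.Ico a b, ‖g x * L x‖ ∂μ ≤ (|a| + (b - a)) * G := by
    rw [← integral_const_mul]
    refine setIntegral_mono_on (integrableOn_mul_preimage_Ico hg0 hg hL).norm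
      (hg.const_mul _).integrableOn (hL measurableSet_Ico) fun x hx => ?_
    rw [norm_mul, Real.norm_of_nonneg (hg0 x), mul_comm]
    refine mul_le_mul_of_nonneg_right (abs_le.2 ⟨?_, ?_⟩) (hg0 x) <;>
      linarith [hx.1, hx.2, le_abs_self a, neg_abs_le a]
  have hG : 0 ≤ G := setIntegral_nonneg (hL measurableSet_Ico) fun x _ => hg0 x
  have hf_abs : |∫ x in L ⁻¹' Set.Ico a b, f x ∂μ| ≤ ∫ x in L ⁻¹' Set.Ico a b, |f x| ∂μ :=
    abs_integral_le_integral_abs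
  rw [integral_add hf.abs.integrableOn (hg.const_mul _).integrableOn, integral_const_mul]
  obtain ⟨hlow, hup⟩ := hfg a b
  rcases abs_cases a with ⟨ha, _⟩ | ⟨ha, _⟩ <;> rw [ha] at hpt <;>
    linarith [le_abs_self (∫ x in L ⁻¹' Set.Ico a b, f x ∂μ),
      neg_abs_le (∫ x in L ⁻¹' Set.Ico a b, f x ∂μ)]

end

namespace RatioBoundedOnSlabs

variable (hfg : RatioBoundedOnSlabs μ f g L) (hg0 : ∀ x, 0 ≤ g x) (hf : Integrable f μ)
  (hg : Integrable g μ) (hL : Measurable L)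
include hfg hg0 hf hg hL

lemma integrable_mul : Integrable (fun x => g x * L x) μ := by
  have hsum : Summable fun k : ℤ =>
      ∫ x in L ⁻¹' Set.Ico (k • (1 : ℝ)) ((k + 1) • (1 : ℝ)), ‖g x * L x‖ ∂μ := by
    refine Summable.of_nonneg_of_le (fun k => integral_nonneg fun x => norm_nonneg _)
      (fun k => (setIntegral_norm_mul_le hg0 hg hL hf hfg).trans_eq ?_)
      (hasSum_setIntegral_preimage_Ico_zsmul hL one_pos (hf.abs.add (hg.const_mul 2))).summable
    simp [add_smul]
  have h := integrableOn_iUnion_of_summable_integral_norm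
    (fun k : ℤ => integrableOn_mul_preimage_Ico hg0 hg hL) hsum
  rwa [← Set.preimage_iUnion, iUnion_Ico_zsmul one_pos, Set.preimage_univ, integrableOn_univ] at h

lemma integral_eq_integral_mul : ∫ x, f x ∂μ = ∫ x, g x * L x ∂μ := by
  have hgL := hfg.integrable_mul hg0 hf hg hL
  have hbound : ∀ ε > 0, |∫ x, f x ∂μ - ∫ x, g x * L x ∂μ| ≤ ε * ∫ x, g x ∂μ := fun ε hε => by
    have hdiff := (hasSum_setIntegral_preimage_Ico_zsmul hL hε hf).sub
      (hasSum_setIntegral_preimage_Ico_zsmul hL hε hgL)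
    have hslab := (hasSum_setIntegral_preimage_Ico_zsmul hL hε hg).mul_left ε
    have hk : ∀ k : ℤ, |∫ x in L ⁻¹' Set.Ico (k • ε) ((k + 1) • ε), f x ∂μ
        - ∫ x in L ⁻¹' Set.Ico (k • ε) ((k + 1) • ε), g x * L x ∂μ|
        ≤ ε * ∫ x in L ⁻¹' Set.Ico (k • ε) ((k + 1) • ε), g x ∂μ := fun k => by
      simpa [add_smul] using abs_setIntegral_sub_setIntegral_mul_le (a := k • ε)
        (b := (k + 1) • ε) hg0 hg hL hfg
    exact abs_le.2 ⟨hasSum_le (fun k => (abs_le.1 (hk k)).1) hslab.neg hdiff,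
      hasSum_le (fun k => (abs_le.1 (hk k)).2) hdiff hslab⟩
  have hlim : Tendsto (fun ε => ε * ∫ x, g x ∂μ) (nhdsWithin 0 (Set.Ioi 0)) (nhds 0) := by
    simpa using ((continuous_mul_const (∫ x, g x ∂μ)).tendsto 0).mono_left nhdsWithin_le_nhds
  exact sub_eq_zero.1 <| abs_nonpos_iff.1 <|
    ge_of_tendsto hlim (eventually_nhdsWithin_of_forall hbound)

end RatioBoundedOnSlabs

end Slabs

lemma measure_eq_zero_of_setIntegral_nonpos [MeasurableSpace X] {μ : Measure X}
    (hg : ∀ x, 0 < g x) (hgint : Integrable g μ) {A : Set X} (h : ∫ x in A, g x ∂μ ≤ 0) :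
    μ A = 0 := by
  have hpos := (setIntegral_pos_iff_support_of_nonneg_ae (ae_of_all _ fun x => (hg x).le)
    hgint.integrableOn).not.1 h.not_gt
  rwa [Function.support_eq_univ fun x => (hg x).ne', Set.univ_inter, not_lt,
    nonpos_iff_eq_zero] at hpos

namespace WeightedMeasurePreserving

variable [MeasurableSpace X] {μ : Measure X} (hsys : WeightedMeasurePreserving T w μ)
  (hf : Measurable f) (hgm : Measurable g)
include hsys hf hgm

lemma measurable_ratioLimsup : Measurable (ratioLimsup T w f g) :=
  Measurable.limsup fun n => measurable_coe_real_ereal.comp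
    ((hsys.measurable_wSum hf n).div (hsys.measurable_wSum hgm n))

lemma measurable_ratioLiminf : Measurable (ratioLiminf T w f g) :=
  Measurable.liminf fun n => measurable_coe_real_ereal.comp
    ((hsys.measurable_wSum hf n).div (hsys.measurable_wSum hgm n))

lemma measurable_ratioLimit : Measurable (ratioLimit T w f g) :=
  (hsys.measurable_ratioLimsup hf hgm).ereal_toReal

variable (hfint : Integrable f μ) (hgint : Integrable g μ)
  (hdiv : ∀ x, Tendsto (fun n => wSum T w g n x) atTop atTop)
include hfint hgint hdiv

section InvariantSet

variable {A : Set X} (hA : MeasurableSet A) (hAinv : T ⁻¹' A = A)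
include hA hAinv

lemma mul_setIntegral_le_of_lt_ratioLimsup {b : ℝ}
    (hb : ∀ᵐ x ∂μ, x ∈ A → (b : EReal) < ratioLimsup T w f g x) :
    b * ∫ x in A, g x ∂μ ≤ ∫ x in A, f x ∂μ := by
  have hw : ∀ x, w x ≠ 0 := fun x => (hsys.weight_pos x).ne'
  set A' := A ∩ ratioLimsup T w f g ⁻¹' Set.Ioi (b : EReal)
  have hA' : MeasurableSet A' := hA.inter (hsys.measurable_ratioLimsup hf hgm measurableSet_Ioi)
  have hA'inv : T ⁻¹' A' = A' := by
    rw [Set.preimage_inter, hAinv, ← Set.preimage_comp, ratioLimsup_comp hw hdiv]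
  have hA'A : A' =ᵐ[μ] A := hb.mono fun x hx => propext ⟨And.left, fun h => ⟨h, hx h⟩⟩
  have h := hsys.setIntegral_nonneg_of_exists_wSum_pos (F := fun y => f y - b * g y)
    (hf.sub (hgm.const_mul b)) (hfint.sub (hgint.const_mul b)) hA' hA'inv
    fun x hx => exists_wSum_sub_mul_pos_of_lt_ratioLimsup hx.2 (hdiv x)
  rw [setIntegral_congr_set hA'A, integral_sub hfint.integrableOn (hgint.const_mul b).integrableOn,
    integral_const_mul] at h
  linarith

lemma mul_setIntegral_le_of_le_ratioLimsup {c : ℝ}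
    (hc : ∀ᵐ x ∂μ, x ∈ A → (c : EReal) ≤ ratioLimsup T w f g x) :
    c * ∫ x in A, g x ∂μ ≤ ∫ x in A, f x ∂μ := by
  have hlt : ∀ b < c, b * ∫ x in A, g x ∂μ ≤ ∫ x in A, f x ∂μ := fun b hb =>
    hsys.mul_setIntegral_le_of_lt_ratioLimsup hf hgm hfint hgint hdiv hA hAinv <|
      hc.mono fun x hx hxA => (EReal.coe_lt_coe_iff.2 hb).trans_le (hx hxA)
  exact le_of_tendsto (((continuous_mul_const _).tendsto c).mono_left nhdsWithin_le_nhds)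
    (eventually_nhdsWithin_of_forall (s := Set.Iio c) hlt)

lemma setIntegral_le_mul_of_ratioLiminf_lt {d : ℝ}
    (hd : ∀ᵐ x ∂μ, x ∈ A → ratioLiminf T w f g x < d) :
    ∫ x in A, f x ∂μ ≤ d * ∫ x in A, g x ∂μ := by
  have h := hsys.mul_setIntegral_le_of_lt_ratioLimsup hf.neg hgm hfint.neg hgint hdiv hA hAinv
    (b := -d) <| hd.mono fun x hx hxA => by
      rw [EReal.coe_neg, EReal.neg_lt_comm, ← ratioLiminf_eq_neg_ratioLimsup_neg]
      exact hx hxA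
  rw [Pi.neg_def, integral_neg] at h
  linarith

end InvariantSet

variable (hg : ∀ x, 0 < g x)
include hg

lemma ae_ratioLimsup_ne_top : ∀ᵐ x ∂μ, ratioLimsup T w f g x ≠ ⊤ := by
  set A := ratioLimsup T w f g ⁻¹' {⊤}
  have hA : MeasurableSet A := hsys.measurable_ratioLimsup hf hgm (measurableSet_singleton ⊤)
  have hAinv : T ⁻¹' A = A := by
    rw [← Set.preimage_comp, ratioLimsup_comp (fun x => (hsys.weight_pos x).ne') hdiv]
  have hb : ∀ b : ℝ, b * ∫ x in A, g x ∂μ ≤ ∫ x in A, f x ∂μ := fun b =>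
    hsys.mul_setIntegral_le_of_lt_ratioLimsup hf hgm hfint hgint hdiv hA hAinv <|
      ae_of_all _ fun x (hx : _ = ⊤) => hx ▸ EReal.coe_lt_top b
  have hG : ∫ x in A, g x ∂μ ≤ 0 := by
    by_contra! hG
    have := hb ((∫ x in A, f x ∂μ + 1) / ∫ x in A, g x ∂μ)
    rw [div_mul_cancel₀ _ hG.ne'] at this
    linarith
  exact measure_eq_zero_iff_ae_notMem.1 (measure_eq_zero_of_setIntegral_nonpos hg hgint hG)

lemma ae_not_ratioLiminf_lt_lt_ratioLimsup {a b : ℝ} (hab : a < b) :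
    ∀ᵐ x ∂μ, ¬ (ratioLiminf T w f g x < a ∧ (b : EReal) < ratioLimsup T w f g x) := by
  have hw : ∀ x, w x ≠ 0 := fun x => (hsys.weight_pos x).ne'
  set A := ratioLiminf T w f g ⁻¹' Set.Iio (a : EReal) ∩ ratioLimsup T w f g ⁻¹' Set.Ioi (b : EReal)
  have hA : MeasurableSet A := (hsys.measurable_ratioLiminf hf hgm measurableSet_Iio).inter
    (hsys.measurable_ratioLimsup hf hgm measurableSet_Ioi)
  have hAinv : T ⁻¹' A = A := by
    rw [Set.preimage_inter, ← Set.preimage_comp, ← Set.preimage_comp, ratioLiminf_comp hw hdiv,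
      ratioLimsup_comp hw hdiv]
  have hlow := hsys.mul_setIntegral_le_of_lt_ratioLimsup hf hgm hfint hgint hdiv hA hAinv
    (b := b) (ae_of_all _ fun x hx => hx.2)
  have hup := hsys.setIntegral_le_mul_of_ratioLiminf_lt hf hgm hfint hgint hdiv hA hAinv
    (d := a) (ae_of_all _ fun x hx => hx.1)
  have hG : ∫ x in A, g x ∂μ ≤ 0 := by nlinarith
  exact measure_eq_zero_iff_ae_notMem.1 (measure_eq_zero_of_setIntegral_nonpos hg hgint hG)

lemma ae_ratioLiminf_eq_ratioLimit_and_ratioLimsup_eq_ratioLimit :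
    ∀ᵐ x ∂μ, ratioLiminf T w f g x = ratioLimit T w f g x ∧
      ratioLimsup T w f g x = ratioLimit T w f g x := by
  have hgap : ∀ᵐ x ∂μ, ∀ q r : ℚ, (q : ℝ) < r →
      ¬ (ratioLiminf T w f g x < (q : ℝ) ∧ ((r : ℝ) : EReal) < ratioLimsup T w f g x) :=
    ae_all_iff.2 fun q => ae_all_iff.2 fun r => by
      by_cases hqr : (q : ℝ) < r
      · exact (hsys.ae_not_ratioLiminf_lt_lt_ratioLimsup hf hgm hfint hgint hdiv hg hqr).mono
          fun x hx _ => hx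
      · exact ae_of_all _ fun x h => absurd h hqr
  filter_upwards [hsys.ae_ratioLimsup_ne_top hf hgm hfint hgint hdiv hg,
    hsys.ae_ratioLimsup_ne_top hf.neg hgm hfint.neg hgint hdiv hg, hgap]
    with x htop hbot hgapx
  have heq : ratioLiminf T w f g x = ratioLimsup T w f g x := by
    refine (liminf_le_limsup (by isBoundedDefault) (by isBoundedDefault)).antisymm
      (not_lt.1 fun hlt => ?_)
    obtain ⟨q, hq, hqΦ⟩ := EReal.lt_iff_exists_rat_btwn.1 hlt
    obtain ⟨r, hqr, hr⟩ := EReal.lt_iff_exists_rat_btwn.1 hqΦ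
    exact hgapx q r (by exact_mod_cast hqr) ⟨hq, hr⟩
  have hne_bot : ratioLimsup T w f g x ≠ ⊥ := by
    rwa [← heq, ratioLiminf_eq_neg_ratioLimsup_neg, Ne, EReal.neg_eq_bot_iff]
  rw [heq, ratioLimit, EReal.coe_toReal htop hne_bot]
  exact ⟨rfl, rfl⟩

lemma ae_tendsto_ratio :
    ∀ᵐ x ∂μ, Tendsto (fun n => ratio T w f g n x) atTop (nhds (ratioLimit T w f g x)) := by
  filter_upwards [hsys.ae_ratioLiminf_eq_ratioLimit_and_ratioLimsup_eq_ratioLimit hf hgm hfint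
    hgint hdiv hg] with x ⟨hinf, hsup⟩
  exact EReal.tendsto_coe.1 (tendsto_of_liminf_eq_limsup hinf hsup)

lemma ratioBoundedOnSlabs_ratioLimit : RatioBoundedOnSlabs μ f g (ratioLimit T w f g) := by
  intro a b
  have hS : MeasurableSet (ratioLimit T w f g ⁻¹' Set.Ico a b) :=
    hsys.measurable_ratioLimit hf hgm measurableSet_Ico
  have hSinv : T ⁻¹' (ratioLimit T w f g ⁻¹' Set.Ico a b) = ratioLimit T w f g ⁻¹' Set.Ico a b := by
    rw [← Set.preimage_comp, ratioLimit_comp (fun x => (hsys.weight_pos x).ne') hdiv]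
  have hae := hsys.ae_ratioLiminf_eq_ratioLimit_and_ratioLimsup_eq_ratioLimit hf hgm hfint hgint
    hdiv hg
  exact ⟨hsys.mul_setIntegral_le_of_le_ratioLimsup hf hgm hfint hgint hdiv hS hSinv <|
      hae.mono fun x hx hxS => hx.2 ▸ EReal.coe_le_coe_iff.2 hxS.1,
    hsys.setIntegral_le_mul_of_ratioLiminf_lt hf hgm hfint hgint hdiv hS hSinv <|
      hae.mono fun x hx hxS => hx.1 ▸ EReal.coe_lt_coe_iff.2 hxS.2⟩

end WeightedMeasurePreserving

end

theorem dowker_ratio_ergodic_general {X : Type*} [MeasurableSpace X]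
    (T : X → X) (f g w : X → ℝ)
    (hT : Measurable T) (hf : Measurable f) (hgm : Measurable g)
    (hwm : Measurable w) (hg : ∀ x, 0 < g x) (hw : ∀ x, 0 < w x)
    (hdiv : ∀ x, Tendsto (fun n : ℕ => wSum T w g n x) atTop atTop)
    (μ : Measure X) (hinv : IsTWInvariant T w μ)
    (hfint : Integrable f μ) (hgint : Integrable g μ) :
    ∃ L : X → ℝ,
      (∀ᵐ x ∂μ, Tendsto (fun n : ℕ => ratio T w f g n x) atTop (nhds (L x))) ∧
      Integrable (fun x => g x * L x) μ ∧
      ∫ x, f x ∂μ = ∫ x, g x * L x ∂μ := by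
  have hsys : WeightedMeasurePreserving T w μ := ⟨hT, hwm, hw, hinv⟩
  have hslabs := hsys.ratioBoundedOnSlabs_ratioLimit hf hgm hfint hgint hdiv hg
  have hL := hsys.measurable_ratioLimit hf hgm
  have hg0 : ∀ x, 0 ≤ g x := fun x => (hg x).le
  exact ⟨ratioLimit T w f g, hsys.ae_tendsto_ratio hf hgm hfint hgint hdiv hg,
    hslabs.integrable_mul hg0 hfint hgint hL, hslabs.integral_eq_integral_mul hg0 hfint hgint hL⟩

theorem dowker_ratio_ergodic {X : Type*} [MeasurableSpace X]
    (T : X → X) (f g w : X → ℝ)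
    (hT : Measurable T) (hf : Measurable f) (hgm : Measurable g)
    (hwm : Measurable w) (hg : ∀ x, 0 < g x) (hw : ∀ x, 0 < w x)
    (hdiv : ∀ x, Tendsto (fun n : ℕ => wSum T w g n x) atTop atTop)
    (μ : Measure X) (hcons : IsConservative T μ) (hinv : IsTWInvariant T w μ)
    (hfint : Integrable f μ) (hgint : Integrable g μ) :
    ∃ L : X → ℝ,
      (∀ᵐ x ∂μ, Tendsto (fun n : ℕ => ratio T w f g n x) atTop (nhds (L x))) ∧
      Integrable (fun x => g x * L x) μ ∧
      ∫ x, f x ∂μ = ∫ x, g x * L x ∂μ :=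
  dowker_ratio_ergodic_general T f g w hT hf hgm hwm hg hw hdiv μ hinv hfint hgint
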